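/- For all real a > 0 and s > 0, the integral converges and (1 / (√π · a^{1/4})) ∫_ℝ ( 1 − 2 e^{x/2} F(e^{x/2}) ) e^{x/2 − (s/√a) eˣ} dx = √s / ( s + √a ). -/

import Mathlib

/-!
Substituting `y = e^{x/2}` turns the integral into `2 ∫₀^∞ (1 - 2yF(y)) e^{-cy²} dy` with
`c = s/√a`. Since `F' = 1 - 2yF`, the derivative of `F(y) e^{-cy²}` is
`e^{-cy²} - 2(1 + c) yF(y) e^{-cy²}`; as `F(0) = 0` and `F(y) → 0` (because `0 ≤ yF(y) ≤ 1`),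
this gives `∫₀^∞ 2yF(y) e^{-cy²} dy = (1 + c)⁻¹ ∫₀^∞ e^{-cy²} dy`, and the Gaussian integral
`√(π/c)/2` finishes the computation.
-/

open MeasureTheory

/-- The Dawson function `F(x) = e^{−x²} ∫₀ˣ e^{t²} dt`. -/
noncomputable def dawson (x : ℝ) : ℝ := Real.exp (-x ^ 2) * ∫ t in (0 : ℝ)..x, Real.exp (t ^ 2)

open Real Set Filter Topology

section ExpSubstitution

variable {E : Type*} [NormedAddCommGroup E] [NormedSpace ℝ E]

theorem integral_exp_smul_comp_exp (g : ℝ → E) :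
    ∫ x, exp x • g (exp x) = ∫ y in Ioi 0, g y := by
  rw [← range_exp, ← image_univ, integral_image_eq_integral_abs_deriv_smul MeasurableSet.univ
    (fun x _ ↦ (hasDerivAt_exp x).hasDerivWithinAt) exp_injective.injOn, setIntegral_univ]
  simp only [abs_of_pos (exp_pos _)]

theorem integrable_exp_smul_comp_exp_iff (g : ℝ → E) :
    Integrable (fun x ↦ exp x • g (exp x)) ↔ IntegrableOn g (Ioi 0) := by
  rw [← range_exp, ← image_univ, integrableOn_image_iff_integrableOn_abs_deriv_smul
    MeasurableSet.univ (fun x _ ↦ (hasDerivAt_exp x).hasDerivWithinAt) exp_injective.injOn,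
    integrableOn_univ]
  simp only [abs_of_pos (exp_pos _)]

theorem integral_exp_div_smul_comp_exp_div (g : ℝ → E) (a : ℝ) :
    ∫ x, exp (x / a) • g (exp (x / a)) = |a| • ∫ y in Ioi 0, g y := by
  rw [Measure.integral_comp_div (fun x ↦ exp x • g (exp x)), integral_exp_smul_comp_exp]

theorem integrable_exp_div_smul_comp_exp_div_iff (g : ℝ → E) {a : ℝ} (ha : a ≠ 0) :
    Integrable (fun x ↦ exp (x / a) • g (exp (x / a))) ↔ IntegrableOn g (Ioi 0) := by
  rw [integrable_comp_div_iff (fun x ↦ exp x • g (exp x)) ha, integrable_exp_smul_comp_exp_iff]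

end ExpSubstitution

theorem hasDerivAt_dawson (x : ℝ) : HasDerivAt dawson (1 - 2 * x * dawson x) x := by
  have hG : HasDerivAt (fun x ↦ ∫ t in (0 : ℝ)..x, exp (t ^ 2)) (exp (x ^ 2)) x :=
    ((continuous_exp.comp (continuous_pow 2)).integral_hasStrictDerivAt 0 x).hasDerivAt
  have hE : HasDerivAt (fun x ↦ exp (-x ^ 2)) (exp (-x ^ 2) * (-(2 * x))) x := by
    simpa using ((hasDerivAt_pow 2 x).neg).exp
  refine (hE.mul hG).congr_deriv ?_
  rw [dawson, ← exp_add, neg_add_cancel, exp_zero]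
  ring

@[fun_prop]
theorem continuous_dawson : Continuous dawson :=
  continuous_iff_continuousAt.2 fun x ↦ (hasDerivAt_dawson x).continuousAt

theorem dawson_nonneg {x : ℝ} (hx : 0 ≤ x) : 0 ≤ dawson x :=
  mul_nonneg (exp_pos _).le (intervalIntegral.integral_nonneg hx fun _ _ ↦ (exp_pos _).le)

theorem mul_integral_exp_sq_le {x : ℝ} (hx : 0 ≤ x) :
    x * ∫ t in (0 : ℝ)..x, exp (t ^ 2) ≤ exp (x ^ 2) - 1 := by
  have hchord : ∀ t ∈ uIcc (0 : ℝ) x, HasDerivAt (fun t ↦ exp (x * t)) (x * exp (x * t)) t :=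
    fun t _ ↦ by simpa [mul_comm] using ((hasDerivAt_id t).const_mul x).exp
  calc x * ∫ t in (0 : ℝ)..x, exp (t ^ 2) = ∫ t in (0 : ℝ)..x, x * exp (t ^ 2) :=
        (intervalIntegral.integral_const_mul _ _).symm
    _ ≤ ∫ t in (0 : ℝ)..x, x * exp (x * t) := by
        refine intervalIntegral.integral_mono_on hx
          (Continuous.intervalIntegrable (by fun_prop) _ _)
          (Continuous.intervalIntegrable (by fun_prop) _ _) fun t ht ↦ ?_
        exact mul_le_mul_of_nonneg_left (exp_le_exp.2 (by nlinarith [ht.1, ht.2])) hx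
    _ = exp (x ^ 2) - 1 := by
        rw [intervalIntegral.integral_eq_sub_of_hasDerivAt hchord
          (Continuous.intervalIntegrable (by fun_prop) _ _)]
        simp [sq]

theorem mul_dawson_le_one {x : ℝ} (hx : 0 ≤ x) : x * dawson x ≤ 1 :=
  calc x * dawson x = exp (-x ^ 2) * (x * ∫ t in (0 : ℝ)..x, exp (t ^ 2)) := by
        rw [dawson]; ring
    _ ≤ exp (-x ^ 2) * (exp (x ^ 2) - 1) :=
        mul_le_mul_of_nonneg_left (mul_integral_exp_sq_le hx) (exp_pos _).le
    _ = 1 - exp (-x ^ 2) := by rw [mul_sub, ← exp_add, neg_add_cancel, exp_zero, mul_one]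
    _ ≤ 1 := sub_le_self _ (exp_pos _).le

theorem abs_one_sub_two_mul_mul_dawson_le_one {x : ℝ} (hx : 0 ≤ x) :
    |1 - 2 * x * dawson x| ≤ 1 := by
  have h₀ : 0 ≤ x * dawson x := mul_nonneg hx (dawson_nonneg hx)
  have h₁ := mul_dawson_le_one hx
  rw [abs_le]
  constructor <;> linarith

theorem tendsto_dawson_atTop : Tendsto dawson atTop (𝓝 0) := by
  refine squeeze_zero' (eventually_ge_atTop 0 |>.mono fun x hx ↦ dawson_nonneg hx)
    ((eventually_gt_atTop 0).mono fun x hx ↦ ?_) tendsto_inv_atTop_zero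
  calc dawson x = x⁻¹ * (x * dawson x) := by field_simp
    _ ≤ x⁻¹ := mul_le_of_le_one_right (inv_nonneg.2 hx.le) (mul_dawson_le_one hx.le)

section DawsonGaussianIntegrals

variable {c : ℝ}

theorem integrableOn_mul_dawson_mul_exp_neg_mul_sq (hc : 0 < c) :
    IntegrableOn (fun x ↦ x * dawson x * exp (-c * x ^ 2)) (Ioi 0) := by
  refine (integrable_exp_neg_mul_sq hc).integrableOn.bdd_mul (c := 1) (by fun_prop) ?_
  filter_upwards [ae_restrict_mem measurableSet_Ioi] with x (hx : 0 < x)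
  rw [norm_of_nonneg (mul_nonneg hx.le (dawson_nonneg hx.le))]
  exact mul_dawson_le_one hx.le

theorem integral_mul_dawson_mul_exp_neg_mul_sq (hc : 0 < c) :
    ∫ x in Ioi 0, x * dawson x * exp (-c * x ^ 2) = √(π / c) / (4 * (1 + c)) := by
  have hderiv : ∀ x ∈ Ici (0 : ℝ), HasDerivAt (fun x ↦ dawson x * exp (-c * x ^ 2))
      (exp (-c * x ^ 2) - 2 * (1 + c) * (x * dawson x * exp (-c * x ^ 2))) x := by
    intro x _
    have hE : HasDerivAt (fun x ↦ exp (-c * x ^ 2)) (exp (-c * x ^ 2) * (-c * (2 * x))) x := by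
      simpa using ((hasDerivAt_pow 2 x).const_mul (-c)).exp
    exact ((hasDerivAt_dawson x).mul hE).congr_deriv (by ring)
  have hlim : Tendsto (fun x ↦ dawson x * exp (-c * x ^ 2)) atTop (𝓝 0) := by
    have hdecay : Tendsto (fun x : ℝ ↦ exp (-c * x ^ 2)) atTop (𝓝 0) :=
      tendsto_exp_atBot.comp ((tendsto_pow_atTop two_ne_zero).const_mul_atTop_of_neg (by linarith))
    simpa using tendsto_dawson_atTop.mul hdecay
  have hgauss := (integrable_exp_neg_mul_sq hc).integrableOn (s := Ioi 0)
  have hFTC := integral_Ioi_of_hasDerivAt_of_tendsto' hderiv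
    (hgauss.sub ((integrableOn_mul_dawson_mul_exp_neg_mul_sq hc).const_mul _)) hlim
  rw [integral_sub hgauss ((integrableOn_mul_dawson_mul_exp_neg_mul_sq hc).const_mul _),
    integral_const_mul, integral_gaussian_Ioi] at hFTC
  rw [show dawson 0 = 0 by simp [dawson], zero_mul, sub_zero] at hFTC
  rw [eq_div_iff (by positivity)]
  linarith

theorem integrableOn_one_sub_two_mul_mul_dawson_mul_exp_neg_mul_sq (hc : 0 < c) :
    IntegrableOn (fun x ↦ (1 - 2 * x * dawson x) * exp (-c * x ^ 2)) (Ioi 0) := by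
  refine (integrable_exp_neg_mul_sq hc).integrableOn.bdd_mul (c := 1) (by fun_prop) ?_
  filter_upwards [ae_restrict_mem measurableSet_Ioi] with x (hx : 0 < x)
  exact abs_one_sub_two_mul_mul_dawson_le_one hx.le

theorem integral_one_sub_two_mul_mul_dawson_mul_exp_neg_mul_sq (hc : 0 < c) :
    ∫ x in Ioi 0, (1 - 2 * x * dawson x) * exp (-c * x ^ 2) = √(π / c) / 2 * (c / (1 + c)) := by
  have hgauss := (integrable_exp_neg_mul_sq hc).integrableOn (s := Ioi 0)
  have hsplit : (fun x ↦ (1 - 2 * x * dawson x) * exp (-c * x ^ 2)) =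
      fun x ↦ exp (-c * x ^ 2) - 2 * (x * dawson x * exp (-c * x ^ 2)) := by
    ext x; ring
  rw [hsplit, integral_sub hgauss ((integrableOn_mul_dawson_mul_exp_neg_mul_sq hc).const_mul _),
    integral_const_mul, integral_gaussian_Ioi, integral_mul_dawson_mul_exp_neg_mul_sq hc]
  field_simp
  ring

end DawsonGaussianIntegrals

theorem sqrt_div_add_sqrt_eq {a s : ℝ} (ha : 0 < a) (hs : 0 < s) :
    √s / (s + √a) =
      1 / (√π * a ^ ((1 : ℝ) / 4)) * (2 * (√(π / (s / √a)) / 2 * (s / √a / (1 + s / √a)))) := by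
  obtain ⟨q, hq, rfl⟩ : ∃ q > 0, a = q ^ 4 := ⟨a ^ ((1 : ℝ) / 4), by positivity, by
    rw [← rpow_natCast, ← rpow_mul ha.le]; norm_num⟩
  obtain ⟨r, hr, rfl⟩ : ∃ r > 0, s = r ^ 2 := ⟨√s, by positivity, (sq_sqrt hs.le).symm⟩
  have hq4 : (q ^ 4) ^ ((1 : ℝ) / 4) = q := by
    rw [← rpow_natCast, ← rpow_mul hq.le]; norm_num
  have hsqrt : √(q ^ 4) = q ^ 2 := by
    rw [show q ^ 4 = (q ^ 2) ^ 2 by ring, sqrt_sq (by positivity)]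
  have hπ : √(π / (r ^ 2 / q ^ 2)) = √π * q / r := by
    rw [div_div_eq_mul_div, sqrt_div (by positivity), sqrt_mul pi_pos.le, sqrt_sq hq.le,
      sqrt_sq hr.le]
  rw [hq4, hsqrt, hπ, sqrt_sq hr.le]
  field_simp
  ring

/-- for `a, s > 0`,
`(1/(√π a^{1/4})) ∫_ℝ (1 − 2 e^{x/2} F(e^{x/2})) e^{x/2 − (s/√a) eˣ} dx = √s / (s + √a)`. -/
theorem integral_rep_scaling_substituted (a s : ℝ) (ha : 0 < a) (hs : 0 < s) :
    Integrable
      (fun x : ℝ => (1 - 2 * Real.exp (x / 2) * dawson (Real.exp (x / 2))) *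
        Real.exp (x / 2 - s / Real.sqrt a * Real.exp x)) ∧
      (1 / (Real.sqrt Real.pi * a ^ ((1 : ℝ) / 4))) *
        ∫ x : ℝ, (1 - 2 * Real.exp (x / 2) * dawson (Real.exp (x / 2))) *
          Real.exp (x / 2 - s / Real.sqrt a * Real.exp x)
        = Real.sqrt s / (s + Real.sqrt a) := by
  have hc : 0 < s / √a := div_pos hs (sqrt_pos.2 ha)
  set g : ℝ → ℝ := fun y ↦ (1 - 2 * y * dawson y) * exp (-(s / √a) * y ^ 2)
  have hsubst : (fun x : ℝ ↦ (1 - 2 * exp (x / 2) * dawson (exp (x / 2))) *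
      exp (x / 2 - s / √a * exp x)) = fun x ↦ exp (x / 2) • g (exp (x / 2)) := by
    ext x
    have hsq : exp (x / 2) ^ 2 = exp x := by rw [← exp_nat_mul]; ring_nf
    simp only [g, smul_eq_mul, hsq]
    rw [mul_left_comm, ← exp_add]
    ring_nf
  rw [hsubst, integral_exp_div_smul_comp_exp_div,
    integrable_exp_div_smul_comp_exp_div_iff _ two_ne_zero,
    integral_one_sub_two_mul_mul_dawson_mul_exp_neg_mul_sq hc, abs_two, smul_eq_mul,
    sqrt_div_add_sqrt_eq ha hs]
  exact ⟨integrableOn_one_sub_two_mul_mul_dawson_mul_exp_neg_mul_sq hc, rfl⟩
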